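/- arXiv:2205.10999 — 6 statements merged into one kernel-verified Lean document; each statement's English description precedes it below -/
import Mathlib

section
/- The limit as n → ∞ of (1 + 1/n)^(n-1) equals e, hence the tree-forest ratio of the complete graphs K_n converges to Euler's number e. -/
open Filter Topology

theorem Real.tendsto_one_add_div_pow_sub_one_exp (x : ℝ) :
    Tendsto (fun n : ℕ => (1 + x / n) ^ (n - 1)) atTop (𝓝 (exp x)) := by
  have hbase : Tendsto (fun n : ℕ => 1 + x / n) atTop (𝓝 1) := by
    simpa using tendsto_const_nhds.add (tendsto_const_div_atTop_nhds_zero_nat x)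
  have hquot := (tendsto_one_add_div_pow_exp x).div hbase one_ne_zero
  rw [div_one] at hquot
  refine hquot.congr' ?_
  filter_upwards [hbase.eventually_ne one_ne_zero, eventually_ge_atTop 1] with n hne hn
  rw [Pi.div_apply, pow_sub₀ _ hne hn, pow_one, div_eq_mul_inv]

/-- `(1+1/n)^(n-1) → e`, hence the tree-forest ratio of the complete graphs `K_n`
converges to Euler's number. -/
theorem treeForestRatio_completeGraph_tendsto_e :
    Filter.Tendsto (fun n : ℕ => (1 + 1 / (n : ℝ)) ^ (n - 1))
      Filter.atTop (nhds (Real.exp 1)) :=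
  Real.tendsto_one_add_div_pow_sub_one_exp 1
end

section
/- The integral ∫_0^4 log(1+x) / (π √(x(4−x))) dx = 2 log φ, where φ = (1+√5)/2 is the golden ratio. -/
open Real MeasureTheory intervalIntegral Set
open scoped goldenRatio

/-!
Substituting `x = 2 - 2 cos θ` carries `dθ / π` on `[0, π]` to the arcsine law on `[0, 4]`, so the
integral equals `π⁻¹ ∫₀^π log (3 - 2 cos θ) dθ`. As `3 = φ² + φ⁻²`, we have
`3 - 2 cos θ = φ⁻² |e^{iθ} - φ²|²`, and by Jensen's formula the mean of `log |z - a|` over the unit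
circle is `log⁺ |a|`; hence the mean of `log (3 - 2 cos θ)` is `2 log φ² - log φ² = 2 log φ`.
-/

theorem image_two_sub_two_mul_cos_Ioo :
    (fun θ ↦ 2 - 2 * cos θ) '' Ioo 0 π = Ioo 0 4 := by
  ext x
  constructor
  · rintro ⟨θ, ⟨hθ0, hθπ⟩, rfl⟩
    have hlt : cos θ < 1 := by simpa using cos_lt_cos_of_nonneg_of_le_pi le_rfl hθπ.le hθ0
    have hgt : -1 < cos θ := by simpa using cos_lt_cos_of_nonneg_of_le_pi hθ0.le le_rfl hθπ
    constructor <;> linarith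
  · rintro ⟨hx0, hx4⟩
    refine ⟨arccos (1 - x / 2), ⟨arccos_pos.2 (by linarith), arccos_lt_pi.2 (by linarith)⟩, ?_⟩
    show 2 - 2 * cos (arccos _) = x
    rw [cos_arccos (by linarith) (by linarith)]
    ring

theorem integral_div_pi_mul_sqrt_eq_integral_comp_cos (g : ℝ → ℝ) :
    ∫ x in (0:ℝ)..4, g x / (π * √(x * (4 - x))) = (∫ θ in (0:ℝ)..π, g (2 - 2 * cos θ)) / π := by
  have hderiv : ∀ θ ∈ Ioo 0 π,
      HasDerivWithinAt (fun θ ↦ 2 - 2 * cos θ) (2 * sin θ) (Ioo 0 π) θ := fun θ _ ↦ by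
    simpa using (((hasDerivAt_cos θ).const_mul 2).const_sub 2).hasDerivWithinAt
  have hinj : InjOn (fun θ ↦ 2 - 2 * cos θ) (Ioo 0 π) := fun a ha b hb hab ↦
    injOn_cos (Ioo_subset_Icc_self ha) (Ioo_subset_Icc_self hb) (by simpa using hab)
  rw [integral_of_le (by norm_num), integral_of_le pi_pos.le, integral_Ioc_eq_integral_Ioo,
    integral_Ioc_eq_integral_Ioo, ← image_two_sub_two_mul_cos_Ioo,
    integral_image_eq_integral_abs_deriv_smul measurableSet_Ioo hderiv hinj,
    ← MeasureTheory.integral_div]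
  refine setIntegral_congr_fun measurableSet_Ioo fun θ ⟨hθ0, hθπ⟩ ↦ ?_
  have hsin : 0 < sin θ := sin_pos_of_pos_of_lt_pi hθ0 hθπ
  have hsq : (2 - 2 * cos θ) * (4 - (2 - 2 * cos θ)) = (2 * sin θ) ^ 2 := by
    nlinarith [sin_sq_add_cos_sq θ]
  rw [smul_eq_mul, hsq, sqrt_sq (by positivity), abs_of_pos (by positivity)]
  field_simp

theorem integral_zero_two_pi_comp_cos {E : Type*} [NormedAddCommGroup E] [NormedSpace ℝ E]
    {f : ℝ → E} (hf : IntervalIntegrable (fun θ ↦ f (cos θ)) volume 0 π) :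
    ∫ θ in (0:ℝ)..2 * π, f (cos θ) = (2:ℝ) • ∫ θ in (0:ℝ)..π, f (cos θ) := by
  have hreflect : ∫ θ in π..2 * π, f (cos θ) = ∫ θ in (0:ℝ)..π, f (cos θ) := by
    have h := integral_comp_sub_left (fun θ ↦ f (cos θ)) (2 * π) (a := 0) (b := π)
    simp only [cos_two_pi_sub, sub_zero, show 2 * π - π = π by ring] at h
    exact h.symm
  have hf' : IntervalIntegrable (fun θ ↦ f (cos θ)) volume π (2 * π) := by
    have h := (hf.comp_sub_left (2 * π)).symm
    simpa only [cos_two_pi_sub, sub_zero, show 2 * π - π = π by ring] using h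
  rw [← integral_add_adjacent_intervals hf hf', hreflect, two_smul]

theorem norm_circleMap_zero_one_sub_ofReal_sq (a θ : ℝ) :
    ‖circleMap 0 1 θ - a‖ ^ 2 = 1 - 2 * a * cos θ + a ^ 2 := by
  have hparts : circleMap 0 1 θ - a = ((cos θ - a : ℝ) : ℂ) + (sin θ : ℝ) * Complex.I := by
    rw [circleMap_zero, Complex.exp_mul_I]
    push_cast
    ring
  rw [hparts, Complex.norm_add_mul_I, sq_sqrt (by positivity)]
  linear_combination sin_sq_add_cos_sq θ

theorem log_one_sub_two_mul_cos_add_sq_eq_two_mul_log_norm (a θ : ℝ) :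
    log (1 - 2 * a * cos θ + a ^ 2) = 2 * log ‖circleMap 0 1 θ - a‖ := by
  rw [← norm_circleMap_zero_one_sub_ofReal_sq, log_pow, Nat.cast_ofNat]

theorem intervalIntegrable_log_one_sub_two_mul_cos_add_sq (a : ℝ) :
    IntervalIntegrable (fun θ ↦ log (1 - 2 * a * cos θ + a ^ 2)) volume 0 π := by
  have h : CircleIntegrable (log ‖· - (a : ℂ)‖) 0 1 := circleIntegrable_log_norm_sub_const 1
  simp_rw [log_one_sub_two_mul_cos_add_sq_eq_two_mul_log_norm]
  refine (h.const_mul 2).mono_set ?_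
  rw [uIcc_of_le pi_pos.le, uIcc_of_le (by positivity)]
  exact Icc_subset_Icc_right (by linarith [pi_pos])

theorem integral_log_one_sub_two_mul_cos_add_sq (a : ℝ) :
    ∫ θ in (0:ℝ)..π, log (1 - 2 * a * cos θ + a ^ 2) = 2 * π * log⁺ |a| := by
  have hcircle : ∫ θ in (0:ℝ)..2 * π, log (1 - 2 * a * cos θ + a ^ 2) = 4 * π * log⁺ |a| := by
    have h := circleAverage_log_norm_sub_const_eq_posLog (a := (a : ℂ))
    rw [circleAverage_def, smul_eq_mul, Complex.norm_real, norm_eq_abs] at h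
    simp_rw [log_one_sub_two_mul_cos_add_sq_eq_two_mul_log_norm,
      intervalIntegral.integral_const_mul]
    field_simp at h
    linarith
  have h := integral_zero_two_pi_comp_cos (f := fun c ↦ log (1 - 2 * a * c + a ^ 2))
    (intervalIntegrable_log_one_sub_two_mul_cos_add_sq a)
  rw [hcircle, smul_eq_mul] at h
  linarith

theorem integral_log_add_inv_sub_two_mul_cos {a : ℝ} (ha : 0 < a) :
    ∫ θ in (0:ℝ)..π, log (a + a⁻¹ - 2 * cos θ) = π * |log a| := by
  have hfactor : ∀ θ, log (a + a⁻¹ - 2 * cos θ) = log (1 - 2 * a * cos θ + a ^ 2) - log a := by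
    intro θ
    by_cases hzero : 1 - 2 * a * cos θ + a ^ 2 = 0
    · obtain rfl : a = 1 := by nlinarith [cos_le_one θ]
      rw [inv_one, log_one, sub_zero]
      ring_nf
    · rw [← log_div hzero ha.ne']
      congr 1
      field_simp
      ring
  simp_rw [hfactor]
  rw [integral_sub (intervalIntegrable_log_one_sub_two_mul_cos_add_sq a) intervalIntegrable_const,
    integral_log_one_sub_two_mul_cos_add_sq, intervalIntegral.integral_const, abs_of_pos ha,
    ← half_mul_log_add_log_abs, smul_eq_mul, sub_zero]
  ring

theorem goldenRatio_sq_add_inv_sq : φ ^ 2 + (φ ^ 2)⁻¹ = 3 := by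
  rw [← inv_pow, inv_goldenRatio, neg_sq]
  linear_combination (φ + ψ + 1) * goldenRatio_add_goldenConj - 2 * goldenRatio_mul_goldenConj

/-- `∫_0^4 log(1+x)/(π √(x(4-x))) dx = 2 log φ` with `φ = (1+√5)/2` the golden ratio. -/
theorem arcsine_potential_at_neg_one :
    ∫ x in (0:ℝ)..4, Real.log (1 + x) / (π * Real.sqrt (x * (4 - x)))
      = 2 * Real.log ((1 + Real.sqrt 5) / 2) := by
  have hshift : ∀ θ, 1 + (2 - 2 * cos θ) = φ ^ 2 + (φ ^ 2)⁻¹ - 2 * cos θ := fun θ ↦ by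
    rw [goldenRatio_sq_add_inv_sq]; ring
  rw [integral_div_pi_mul_sqrt_eq_integral_comp_cos]
  simp_rw [hshift]
  rw [integral_log_add_inv_sub_two_mul_cos (by positivity),
    abs_of_pos (log_pos (one_lt_pow₀ one_lt_goldenRatio two_ne_zero)), log_pow]
  field_simp
  ring
end

section
/- Let L(n) = Π_{k=0}^{n-1} (1 + 4sin²(πk/n)) be the Fredholm determinant det(1+K) for the cycle graph C_n. Then (1/n) log(L(n)/n²) converges as n → ∞ to 2 log φ, where φ is the golden ratio. -/
open Real

/-- `L n = Π_{k=0}^{n-1} (1 + 4 sin²(πk/n))`, the number of rooted spanning forests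
of the cycle graph `C_n` (the Fredholm determinant `det(1+K)`). -/
noncomputable def cycleForests (n : ℕ) : ℝ :=
  ∏ k ∈ Finset.range n, (1 + 4 * Real.sin (π * k / n) ^ 2)

/-!
With `x = φ²` we have `(x - 1)² = x`, so each factor of `L(n)` is `|x - ζᵏ|² / x`, where
`ζ = exp(2πi/n)`. Since `∏ₖ (x - ζᵏ) = xⁿ - 1`, this gives the exact formula
`L(n) = φ²ⁿ (1 - φ⁻²ⁿ)²`, in place of the Riemann sum. The factor `(1 - φ⁻²ⁿ)²` tends to `1`
and `n²` grows subexponentially, so neither affects the exponential growth rate `log φ²`.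
-/

open Finset Filter Topology
open scoped goldenRatio

theorem IsPrimitiveRoot.prod_range_sub_pow {R : Type*} [CommRing R] [IsDomain R] {n : ℕ}
    {ζ : R} (hζ : IsPrimitiveRoot ζ n) (hn : 0 < n) (z : R) :
    ∏ k ∈ range n, (z - ζ ^ k) = z ^ n - 1 := by
  simpa [Polynomial.eval_prod] using
    (congrArg (Polynomial.eval z) (X_pow_sub_C_eq_prod hζ hn (one_pow n))).symm

theorem Complex.normSq_ofReal_sub_exp_two_mul_I (x a : ℝ) :
    Complex.normSq (x - Complex.exp (↑(2 * a) * Complex.I)) =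
      (x - 1) ^ 2 + 4 * x * Real.sin a ^ 2 := by
  rw [Complex.normSq_apply]
  simp only [Complex.sub_re, Complex.sub_im, Complex.ofReal_re, Complex.ofReal_im,
    Complex.exp_ofReal_mul_I_re, Complex.exp_ofReal_mul_I_im]
  rw [Real.cos_two_mul, Real.sin_two_mul]
  linear_combination (4 * Real.cos a ^ 2 - 4 * x) * Real.sin_sq_add_cos_sq a

theorem prod_range_sq_sub_one_add_sin_sq (x : ℝ) {n : ℕ} (hn : 0 < n) :
    ∏ k ∈ range n, ((x - 1) ^ 2 + 4 * x * sin (π * k / n) ^ 2) = (x ^ n - 1) ^ 2 := by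
  have hζ := Complex.isPrimitiveRoot_exp n hn.ne'
  have hfactor (k : ℕ) : (x - 1) ^ 2 + 4 * x * sin (π * k / n) ^ 2 =
      Complex.normSq (x - Complex.exp (2 * π * Complex.I / n) ^ k) := by
    rw [← Complex.exp_nat_mul, ← Complex.normSq_ofReal_sub_exp_two_mul_I]
    congr 3
    push_cast
    ring
  simp_rw [hfactor, ← map_prod, hζ.prod_range_sub_pow hn, ← Complex.ofReal_pow,
    ← Complex.ofReal_one, ← Complex.ofReal_sub, Complex.normSq_ofReal, sq]

theorem cycleForests_eq_pow_mul {x : ℝ} (hx : (x - 1) ^ 2 = x) {n : ℕ} (hn : 0 < n) :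
    cycleForests n = x ^ n * (1 - x⁻¹ ^ n) ^ 2 := by
  have hx0 : x ≠ 0 := by rintro rfl; norm_num at hx
  have hprod : x ^ n * cycleForests n = (x ^ n - 1) ^ 2 := by
    rw [← prod_range_sq_sub_one_add_sin_sq x hn, cycleForests, ← card_range n, ← prod_const,
      card_range, ← prod_mul_distrib]
    refine prod_congr rfl fun k _ => ?_
    rw [hx]; ring
  have hxn : x ^ n ≠ 0 := pow_ne_zero n hx0
  rw [inv_pow]
  field_simp
  linear_combination hprod

theorem tendsto_inv_mul_log_pow_mul_div_sq {x : ℝ} (hx : 0 < x) {g : ℕ → ℝ} {c : ℝ}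
    (hg : Tendsto g atTop (𝓝 c)) (hc : 0 < c) :
    Tendsto (fun n : ℕ => (1 / (n : ℝ)) * log (x ^ n * g n / n ^ 2)) atTop (𝓝 (log x)) := by
  have hlog_g : Tendsto (fun n : ℕ => (1 / (n : ℝ)) * log (g n)) atTop (𝓝 0) := by
    simpa using tendsto_one_div_atTop_nhds_zero_nat.mul ((continuousAt_log hc.ne').tendsto.comp hg)
  have hlog_n : Tendsto (fun n : ℕ => log n / n) atTop (𝓝 0) :=
    isLittleO_log_id_atTop.tendsto_div_nhds_zero.comp tendsto_natCast_atTop_atTop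
  have hlim := (hlog_g.sub (hlog_n.const_mul 2)).const_add (log x)
  rw [mul_zero, sub_zero, add_zero] at hlim
  refine hlim.congr' ?_
  filter_upwards [eventually_ge_atTop 1, hg.eventually (lt_mem_nhds hc)] with n hn hgn
  have hn0 : (n : ℝ) ≠ 0 := by positivity
  rw [log_div (by positivity) (by positivity), log_mul (by positivity) hgn.ne', log_pow, log_pow]
  field_simp
  ring

/-- The tree-forest index `(1/n) log(L(n)/n²)` of the cycle graph `C_n` converges to
`2 log φ`, where `φ = (1+√5)/2` is the golden ratio. -/
theorem treeForestIndex_cycle_tendsto :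
    Filter.Tendsto (fun n : ℕ => (1 / (n : ℝ)) * Real.log (cycleForests n / (n : ℝ) ^ 2))
      Filter.atTop (nhds (2 * Real.log ((1 + Real.sqrt 5) / 2))) := by
  have hx : (φ ^ 2 - 1) ^ 2 = φ ^ 2 := by rw [goldenRatio_sq, add_sub_cancel_right, goldenRatio_sq]
  have hr : (φ ^ 2)⁻¹ < 1 := inv_lt_one_of_one_lt₀ (one_lt_pow₀ one_lt_goldenRatio two_ne_zero)
  have hg : Tendsto (fun n : ℕ => (1 - (φ ^ 2)⁻¹ ^ n) ^ 2) atTop (𝓝 1) := by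
    simpa using ((tendsto_pow_atTop_nhds_zero_of_lt_one (by positivity) hr).const_sub 1).pow 2
  rw [show 2 * log ((1 + √5) / 2) = log (φ ^ 2) by rw [log_pow]; norm_num]
  refine (tendsto_inv_mul_log_pow_mul_div_sq (by positivity) hg one_pos).congr' ?_
  filter_upwards [eventually_gt_atTop 0] with n hn
  rw [cycleForests_eq_pow_mul hx hn]
end

section
/- The sequence L(n) defined by the number of rooted spanning forests of the cycle graph C_n, L(n) = Π_{k=0}^{n-1}(1 + 4 sin²(πk/n)), satisfies the recursion L(n+1) = 3 L(n) − L(n−1) + 2 for n ≥ 2. -/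
open Real

/-!
Let `x, y = (3 ± √5)/2`, so `x + y = 3` and `x y = 1`. Then
`x (1 + 4 sin²(πk/n)) = x (3 - 2 cos(2πk/n)) = |x - ζ^k|²` for `ζ = e^{2πi/n}`, and
`∏_k (x - ζ^k) = x^n - 1` gives `L(n) = x^n + y^n - 2` for `n ≥ 1`. Both `x^n` and `y^n`
satisfy `u_{n+1} = 3 u_n - u_{n-1}`, and the constant `-2` accounts for the `+ 2`.
-/

open Finset Polynomial

theorem IsPrimitiveRoot.prod_sub_pow_eq_pow_sub_one {R : Type*} [CommRing R] [IsDomain R]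
    {ζ : R} {n : ℕ} (hζ : IsPrimitiveRoot ζ n) (hn : 0 < n) (z : R) :
    ∏ k ∈ range n, (z - ζ ^ k) = z ^ n - 1 := by
  simpa [eval_prod] using congrArg (eval z) (X_pow_sub_C_eq_prod hζ hn (one_pow n)).symm

theorem Complex.sub_exp_mul_sub_exp_neg (x θ : ℝ) :
    ((x : ℂ) - Complex.exp (θ * Complex.I)) * ((x : ℂ) - Complex.exp (-θ * Complex.I)) =
      ((x ^ 2 - 2 * x * Real.cos θ + 1 : ℝ) : ℂ) := by
  have hsum := Complex.two_cos (θ : ℂ)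
  have hprod : Complex.exp (θ * Complex.I) * Complex.exp (-θ * Complex.I) = 1 := by
    rw [← Complex.exp_add]; simp
  push_cast
  linear_combination hprod + (x : ℂ) * hsum

theorem prod_sq_sub_two_mul_cos_add_one {n : ℕ} (hn : 0 < n) (x : ℝ) :
    ∏ k ∈ range n, (x ^ 2 - 2 * x * Real.cos (2 * π * k / n) + 1) = (x ^ n - 1) ^ 2 := by
  set ζ : ℂ := Complex.exp (2 * π * Complex.I / n)
  have hζ : IsPrimitiveRoot ζ n := Complex.isPrimitiveRoot_exp n hn.ne'
  have hpow (k : ℕ) : ζ ^ k = Complex.exp (((2 * π * k / n : ℝ) : ℂ) * Complex.I) := by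
    rw [← Complex.exp_nat_mul]; push_cast; ring_nf
  have hfactor (k : ℕ) : (((x ^ 2 - 2 * x * Real.cos (2 * π * k / n) + 1 : ℝ)) : ℂ) =
      ((x : ℂ) - ζ ^ k) * ((x : ℂ) - ζ⁻¹ ^ k) := by
    rw [← Complex.sub_exp_mul_sub_exp_neg, inv_pow, hpow, ← Complex.exp_neg, neg_mul]
  apply Complex.ofReal_injective
  rw [Complex.ofReal_prod, prod_congr rfl fun k _ => hfactor k, prod_mul_distrib,
    hζ.prod_sub_pow_eq_pow_sub_one hn, hζ.inv.prod_sub_pow_eq_pow_sub_one hn]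
  push_cast; ring

theorem Real.one_add_four_mul_sin_sq (θ : ℝ) :
    1 + 4 * Real.sin θ ^ 2 = 3 - 2 * Real.cos (2 * θ) := by
  rw [Real.cos_two_mul, Real.cos_sq']; ring

theorem cycleForests_eq_pow_add_pow {n : ℕ} (hn : 0 < n) {x y : ℝ} (hsum : x + y = 3)
    (hprod : x * y = 1) : cycleForests n = x ^ n + y ^ n - 2 := by
  have hfactor (k : ℕ) : x * (1 + 4 * Real.sin (π * k / n) ^ 2) =
      x ^ 2 - 2 * x * Real.cos (2 * π * k / n) + 1 := by
    rw [Real.one_add_four_mul_sin_sq, mul_div_assoc, ← mul_assoc, ← mul_div_assoc]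
    linear_combination hprod - x * hsum
  have hscaled : x ^ n * cycleForests n = (x ^ n - 1) ^ 2 := by
    rw [← prod_sq_sub_two_mul_cos_add_one hn, ← prod_congr rfl fun k _ => hfactor k,
      prod_mul_distrib, prod_const, card_range, cycleForests]
  have hprod_pow : x ^ n * y ^ n = 1 := by rw [← mul_pow, hprod, one_pow]
  linear_combination y ^ n * hscaled - (cycleForests n - x ^ n + 2) * hprod_pow

/-- The forest numbers of cycle graphs satisfy `L(n+1) = 3 L(n) - L(n-1) + 2`
for `n ≥ 2`. -/
theorem cycleForests_recursion (n : ℕ) (hn : 2 ≤ n) :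
    cycleForests (n + 1) = 3 * cycleForests n - cycleForests (n - 1) + 2 := by
  obtain ⟨m, rfl⟩ : ∃ m, n = m + 2 := ⟨n - 2, by omega⟩
  set x := (3 + √5) / 2
  set y := (3 - √5) / 2
  have hsum : x + y = 3 := by ring
  have hprod : x * y = 1 := by
    linear_combination (-1 / 4 : ℝ) * Real.sq_sqrt (show (0 : ℝ) ≤ 5 by norm_num)
  have hclosed (k : ℕ) : cycleForests (k + 1) = x ^ (k + 1) + y ^ (k + 1) - 2 :=
    cycleForests_eq_pow_add_pow k.succ_pos hsum hprod
  rw [show m + 2 - 1 = m + 1 from rfl, hclosed, hclosed, hclosed]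
  linear_combination (x ^ (m + 2) + y ^ (m + 2)) * hsum - (x ^ (m + 1) + y ^ (m + 1)) * hprod
end

section
/- Let λ_1 ≤ λ_2 ≤ … ≤ λ_n be the eigenvalues of the Kirchhoff Laplacian K of a finite simple graph with vertex degrees d_1 ≤ d_2 ≤ … ≤ d_n sorted increasingly. Then λ_k ≤ 2 d_k for every k. -/
/-!
Fix `k`, put `μ = λ_{p k}` and `d = d_{q k}`. At most `k` eigenvalues lie below `μ` and at
most `n - 1 - k` vertices have degree above `d`, so a dimension count gives a nonzero vector `x`
orthogonal to every eigenvector with eigenvalue `< μ` and vanishing at every vertex of degree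
`> d`. Expanding `x` in the eigenbasis gives `μ ‖x‖² ≤ xᵀ K x`. On the other hand
`xᵀ K x ≤ 2 xᵀ D x` because the signless Laplacian `D + A` is positive semidefinite, and
`xᵀ D x ≤ d ‖x‖²` by the support condition on `x`.
-/

open Finset Matrix
open scoped InnerProductSpace

section RayleighQuotient

variable {E : Type*} [NormedAddCommGroup E] [InnerProductSpace ℝ E]

theorem exists_ne_zero_forall_inner_eq_zero [FiniteDimensional ℝ E] {κ : Type*} [Fintype κ]
    (v : κ → E) (hκ : Fintype.card κ < Module.finrank ℝ E) :
    ∃ x : E, x ≠ 0 ∧ ∀ j, ⟪v j, x⟫_ℝ = 0 := by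
  let f : E →ₗ[ℝ] κ → ℝ := LinearMap.pi fun j => innerₛₗ ℝ (v j)
  have hker : LinearMap.ker f ≠ ⊥ :=
    LinearMap.ker_ne_bot_of_finrank_lt (by rwa [Module.finrank_fintype_fun_eq_card])
  obtain ⟨x, hx, hx0⟩ := (Submodule.ne_bot_iff _).mp hker
  exact ⟨x, hx0, fun j => congrFun hx j⟩

theorem OrthonormalBasis.mul_inner_self_le_inner_map_self {ι : Type*} [Fintype ι]
    (b : OrthonormalBasis ι ℝ E) {T : E →ₗ[ℝ] E} (hT : T.IsSymmetric) {ev : ι → ℝ}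
    (hb : ∀ i, T (b i) = ev i • b i) {μ : ℝ} {x : E} (hx : ∀ i, ev i < μ → ⟪b i, x⟫_ℝ = 0) :
    μ * ⟪x, x⟫_ℝ ≤ ⟪T x, x⟫_ℝ := by
  rw [← b.sum_inner_mul_inner x x, ← b.sum_inner_mul_inner (T x) x, mul_sum]
  refine sum_le_sum fun i _ => ?_
  rw [hT, hb, inner_smul_right, real_inner_comm (b i)]
  rcases lt_or_ge (ev i) μ with hi | hi
  · simp [hx i hi]
  · nlinarith [mul_self_nonneg ⟪b i, x⟫_ℝ]

end RayleighQuotient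

theorem Matrix.inner_toEuclideanLin_self {n : Type*} [Fintype n] [DecidableEq n]
    (A : Matrix n n ℝ) (x : EuclideanSpace ℝ n) :
    ⟪toEuclideanLin A x, x⟫_ℝ = x.ofLp ⬝ᵥ (A *ᵥ x.ofLp) :=
  rfl

theorem Matrix.IsHermitian.toEuclideanLin_eigenvectorBasis {𝕜 n : Type*} [RCLike 𝕜] [Fintype n]
    [DecidableEq n] {A : Matrix n n 𝕜} (hA : A.IsHermitian) (i : n) :
    toEuclideanLin A (hA.eigenvectorBasis i) = hA.eigenvalues i • hA.eigenvectorBasis i :=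
  WithLp.ofLp_injective 2 (hA.mulVec_eigenvectorBasis i)

section SortedValues

variable {ι α : Type*} [Fintype ι] [LinearOrder α] {n : ℕ} (p : Fin n ≃ ι) {f : ι → α}

theorem Fin.card_subtype_lt_apply_le (hf : Monotone fun k => f (p k)) (k : Fin n) :
    Fintype.card {i // f i < f (p k)} ≤ k :=
  calc Fintype.card {i // f i < f (p k)}
      ≤ Fintype.card {j : Fin n // j < k} :=
        Fintype.card_le_of_injective (fun i => ⟨p.symm i, hf.reflect_lt (by simpa using i.2)⟩)
          fun i i' h => Subtype.ext (p.symm.injective (congrArg Subtype.val h))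
    _ = k := by rw [Fintype.card_subtype, filter_gt_eq_Iio, Fin.card_Iio]

theorem Fin.card_subtype_apply_lt_le (hf : Monotone fun k => f (p k)) (k : Fin n) :
    Fintype.card {i // f (p k) < f i} ≤ n - 1 - k :=
  calc Fintype.card {i // f (p k) < f i}
      ≤ Fintype.card {j : Fin n // k < j} :=
        Fintype.card_le_of_injective (fun i => ⟨p.symm i, hf.reflect_lt (by simpa using i.2)⟩)
          fun i i' h => Subtype.ext (p.symm.injective (congrArg Subtype.val h))
    _ = n - 1 - k := by rw [Fintype.card_subtype, filter_lt_eq_Ioi, Fin.card_Ioi]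

end SortedValues

namespace SimpleGraph

variable {V R : Type*} [Fintype V] (G : SimpleGraph V) [DecidableRel G.Adj]

theorem sum_sum_ite_adj_left [CommSemiring R] (f : V → R) :
    ∑ i, ∑ j, (if G.Adj i j then f i else 0) = ∑ i, G.degree i * f i := by
  simp_rw [G.degree_eq_sum_if_adj (R := R), sum_mul, ite_mul, one_mul, zero_mul]

theorem sum_sum_ite_adj_right [CommSemiring R] (f : V → R) :
    ∑ i, ∑ j, (if G.Adj i j then f j else 0) = ∑ i, G.degree i * f i := by
  rw [sum_comm, ← sum_sum_ite_adj_left]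
  exact sum_congr rfl fun i _ => sum_congr rfl fun j _ => if_congr (G.adj_comm j i) rfl rfl

variable [DecidableEq V] [Field R] [LinearOrder R] [IsStrictOrderedRing R]

theorem dotProduct_mulVec_lapMatrix_le_two_mul (x : V → R) :
    x ⬝ᵥ (G.lapMatrix R *ᵥ x) ≤ 2 * (x ⬝ᵥ (G.degMatrix R *ᵥ x)) := by
  have signless_nonneg : 0 ≤ ∑ i, ∑ j, (if G.Adj i j then (x i + x j) ^ 2 else 0) :=
    sum_nonneg fun i _ => sum_nonneg fun j _ => by split_ifs <;> positivity
  have signless_eq : ∑ i, ∑ j, (if G.Adj i j then (x i + x j) ^ 2 else 0) =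
      2 * (x ⬝ᵥ (G.degMatrix R *ᵥ x)) + 2 * (x ⬝ᵥ (G.adjMatrix R *ᵥ x)) := by
    have expand (i j : V) : (if G.Adj i j then (x i + x j) ^ 2 else 0) =
        (if G.Adj i j then x i * x i else 0) + (if G.Adj i j then x j * x j else 0) +
          2 * (if G.Adj i j then x i * x j else 0) := by
      split_ifs <;> ring
    simp_rw [expand, sum_add_distrib, ← mul_sum, sum_sum_ite_adj_left, sum_sum_ite_adj_right,
      dotProduct_mulVec_degMatrix, dotProduct_mulVec_adjMatrix, mul_assoc]
    ring
  rw [lapMatrix, sub_mulVec, dotProduct_sub]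
  linarith

theorem dotProduct_mulVec_degMatrix_le {d : ℕ} {x : V → R}
    (hx : ∀ u, d < G.degree u → x u = 0) :
    x ⬝ᵥ (G.degMatrix R *ᵥ x) ≤ d * (x ⬝ᵥ x) := by
  rw [dotProduct_mulVec_degMatrix, dotProduct, mul_sum]
  refine sum_le_sum fun u _ => ?_
  rcases lt_or_ge d (G.degree u) with hu | hu
  · simp [hx u hu]
  · rw [mul_assoc]
    exact mul_le_mul_of_nonneg_right (by exact_mod_cast hu) (mul_self_nonneg (x u))

end SimpleGraph

/-- If `λ_1 ≤ … ≤ λ_n` are the eigenvalues of the Kirchhoff Laplacian of a finite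
simple graph and `d_1 ≤ … ≤ d_n` its vertex degrees sorted increasingly, then
`λ_k ≤ 2 d_k` for every `k`. -/
theorem lapMatrix_eigenvalue_le_two_mul_degree_sorted
    {V : Type*} [Fintype V] [DecidableEq V] (G : SimpleGraph V) [DecidableRel G.Adj]
    (hH : (G.lapMatrix ℝ).IsHermitian)
    (p q : Fin (Fintype.card V) ≃ V)
    (hp : Monotone fun k => hH.eigenvalues (p k))
    (hq : Monotone fun k => G.degree (q k)) :
    ∀ k, hH.eigenvalues (p k) ≤ 2 * (G.degree (q k) : ℝ) := by
  intro k
  have hI := Fin.card_subtype_lt_apply_le p hp k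
  have hJ := Fin.card_subtype_apply_lt_le q (f := fun u => G.degree u) hq k
  set μ := hH.eigenvalues (p k)
  set d := G.degree (q k)
  obtain ⟨x, hx0, hx⟩ := exists_ne_zero_forall_inner_eq_zero
    (Sum.elim (fun i : {i // hH.eigenvalues i < μ} => hH.eigenvectorBasis i)
      (fun u : {u // d < G.degree u} => EuclideanSpace.single (u : V) (1 : ℝ))) <| by
    rw [Fintype.card_sum, finrank_euclideanSpace]
    omega
  have lower : μ * ⟪x, x⟫_ℝ ≤ ⟪toEuclideanLin (G.lapMatrix ℝ) x, x⟫_ℝ :=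
    hH.eigenvectorBasis.mul_inner_self_le_inner_map_self (isSymmetric_toEuclideanLin_iff.mpr hH)
      hH.toEuclideanLin_eigenvectorBasis fun i hi => hx (Sum.inl ⟨i, hi⟩)
  have hsupp (u : V) (hu : d < G.degree u) : x u = 0 := by
    simpa [EuclideanSpace.inner_single_left] using hx (Sum.inr ⟨u, hu⟩)
  have upper : ⟪toEuclideanLin (G.lapMatrix ℝ) x, x⟫_ℝ ≤ 2 * d * ⟪x, x⟫_ℝ :=
    calc ⟪toEuclideanLin (G.lapMatrix ℝ) x, x⟫_ℝ = x.ofLp ⬝ᵥ (G.lapMatrix ℝ *ᵥ x.ofLp) :=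
          inner_toEuclideanLin_self _ x
      _ ≤ 2 * (x.ofLp ⬝ᵥ (G.degMatrix ℝ *ᵥ x.ofLp)) := G.dotProduct_mulVec_lapMatrix_le_two_mul _
      _ ≤ 2 * (d * (x.ofLp ⬝ᵥ x.ofLp)) := by gcongr; exact G.dotProduct_mulVec_degMatrix_le hsupp
      _ = 2 * d * ⟪x, x⟫_ℝ := by rw [mul_assoc]; rfl
  exact le_of_mul_le_mul_right (lower.trans upper) (real_inner_self_pos.mpr hx0)
end

section
/- If dμ is the arcsine distribution dμ(x) = dx/(π√(x(4−x))) on [0,4], then for every real z < 0 the potential U(z) = ∫_0^4 log(x − z) dμ(x) equals 2 log((√(−z) + √(4−z))/2). -/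
/-!
Substituting `x = 2 + 2 cos θ` turns the arcsine law into the uniform law on `[0, π]`, and by the
symmetry `θ ↦ 2π - θ` into the uniform law on the unit circle. With `w = ((√(-z) + √(4-z))/2)²`,
the root `> 1` of `w + w⁻¹ = 2 - z`, one has `2 - z + 2 cos θ = |e^{iθ} + w|² / w`, and the circle
average of `log |ζ + w|` is `log⁺ w = log w` (Jensen). Hence `U(z) = 2 log w - log w = log w`.
-/

open Real MeasureTheory intervalIntegral Set

theorem Real.image_cos_Ioo_zero_pi : cos '' Ioo 0 π = Ioo (-1) 1 := by
  simpa using cosPartialHomeomorph.image_source_eq_target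

theorem integral_div_pi_mul_sqrt_eq_integral_cos {a b : ℝ} (hab : a < b) (f : ℝ → ℝ) :
    ∫ x in a..b, f x / (π * √((x - a) * (b - x))) =
      π⁻¹ * ∫ θ in 0..π, f ((b - a) / 2 * cos θ + (a + b) / 2) := by
  set h := (b - a) / 2
  set m := (a + b) / 2
  have hh : 0 < h := by simp only [h]; linarith
  set φ : ℝ → ℝ := fun θ => h * cos θ + m
  have himage : φ '' Ioo 0 π = Ioo a b := by
    rw [← image_image (fun y => h * y + m) cos, image_cos_Ioo_zero_pi, image_affine_Ioo hh]
    congr 1 <;> simp only [h, m] <;> ring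
  have hderiv : ∀ θ ∈ Ioo 0 π, HasDerivWithinAt φ (h * -sin θ) (Ioo 0 π) θ := fun θ _ =>
    (((hasDerivAt_cos θ).const_mul h).add_const m).hasDerivWithinAt
  have hinj : InjOn φ (Ioo 0 π) := fun x hx y hy hxy =>
    injOn_cos (Ioo_subset_Icc_self hx) (Ioo_subset_Icc_self hy) (by simpa [φ, hh.ne'] using hxy)
  have hjac : ∀ θ ∈ Ioo 0 π,
      |h * -sin θ| • (f (φ θ) / (π * √((φ θ - a) * (b - φ θ)))) = π⁻¹ * f (φ θ) := by
    rintro θ ⟨hθ0, hθπ⟩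
    have hsinθ : 0 < sin θ := sin_pos_of_pos_of_lt_pi hθ0 hθπ
    have hsin : 0 < h * sin θ := mul_pos hh hsinθ
    have hsq : (φ θ - a) * (b - φ θ) = (h * sin θ) ^ 2 := by
      simp only [φ, h, m]; linear_combination -((b - a) / 2) ^ 2 * sin_sq_add_cos_sq θ
    rw [hsq, sqrt_sq hsin.le, mul_neg, abs_neg, abs_of_pos hsin, smul_eq_mul]
    field_simp [hsinθ.ne']
  calc ∫ x in a..b, f x / (π * √((x - a) * (b - x)))
      = ∫ x in φ '' Ioo 0 π, f x / (π * √((x - a) * (b - x))) := by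
        rw [himage, integral_of_le hab.le, integral_Ioc_eq_integral_Ioo]
    _ = ∫ θ in Ioo 0 π, π⁻¹ * f (φ θ) := by
        rw [integral_image_eq_integral_abs_deriv_smul measurableSet_Ioo hderiv hinj]
        exact setIntegral_congr_fun measurableSet_Ioo hjac
    _ = π⁻¹ * ∫ θ in 0..π, f (φ θ) := by
        rw [MeasureTheory.integral_const_mul, integral_of_le pi_pos.le, integral_Ioc_eq_integral_Ioo]

theorem Real.circleAverage_comp_re {E : Type*} [NormedAddCommGroup E] [NormedSpace ℝ E]
    (g : ℝ → E) (hg : IntervalIntegrable (fun θ => g (cos θ)) volume 0 π) :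
    circleAverage (fun ζ => g ζ.re) 0 1 = π⁻¹ • ∫ θ in 0..π, g (cos θ) := by
  have hreflect : ∫ θ in π..2 * π, g (cos θ) = ∫ θ in 0..π, g (cos θ) := by
    have := integral_comp_sub_left (fun θ => g (cos θ)) (2 * π) (a := 0) (b := π)
    simp only [cos_two_pi_sub, sub_zero] at this
    rw [this, show 2 * π - π = π by ring]
  have hg' : IntervalIntegrable (fun θ => g (cos θ)) volume π (2 * π) := by
    have := hg.comp_sub_left (2 * π)
    simp only [cos_two_pi_sub, sub_zero] at this
    rw [show 2 * π - π = π by ring] at this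
    exact this.symm
  have hre : ∀ θ : ℝ, (circleMap 0 1 θ).re = cos θ := fun θ => by simp [circleMap]
  simp only [circleAverage_def, hre]
  rw [← integral_add_adjacent_intervals hg hg', hreflect, ← two_smul ℝ, smul_smul]
  congr 1
  field_simp

theorem Real.circleAverage_log_add_inv_add_two_mul_re {w : ℝ} (hw : 1 < w) :
    circleAverage (fun ζ : ℂ => log (w + w⁻¹ + 2 * ζ.re)) 0 1 = log w := by
  have hw0 : 0 < w := by linarith
  have hsphere : EqOn (fun ζ : ℂ => log (w + w⁻¹ + 2 * ζ.re))
      (fun ζ => (2 : ℝ) • log ‖ζ + w‖ - log w) (Metric.sphere 0 |1|) := by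
    intro ζ hζ
    rw [abs_one, mem_sphere_zero_iff_norm] at hζ
    have hpos : 0 < ‖ζ + w‖ := by
      have := norm_sub_norm_le (w : ℂ) (-ζ)
      rw [sub_neg_eq_add, norm_neg, hζ, Complex.norm_real, norm_of_nonneg hw0.le, add_comm] at this
      linarith
    have hnorm : ‖ζ + w‖ ^ 2 = w * (w + w⁻¹ + 2 * ζ.re) := by
      rw [Complex.sq_norm, Complex.normSq_apply]
      have := Complex.sq_norm ζ
      rw [hζ, Complex.normSq_apply] at this
      simp only [Complex.add_re, Complex.ofReal_re, Complex.add_im, Complex.ofReal_im, add_zero]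
      field_simp
      linear_combination -this
    have hquot : w + w⁻¹ + 2 * ζ.re = ‖ζ + w‖ ^ 2 / w := by rw [hnorm]; field_simp
    dsimp only
    rw [hquot, log_div (by positivity) hw0.ne', log_pow, smul_eq_mul]
    push_cast
    ring
  have hint : CircleIntegrable (fun ζ : ℂ => log ‖ζ + w‖) 0 1 := by
    simpa using circleIntegrable_log_norm_sub_const (a := -(w : ℂ)) (c := 0) 1
  rw [circleAverage_congr_sphere hsphere,
    circleAverage_fun_sub (f₁ := fun ζ => (2 : ℝ) • log ‖ζ + w‖) (hint.const_smul (a := 2))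
      (circleIntegrable_const _ 0 1), circleAverage_fun_smul, circleAverage_const,
    circleAverage_log_norm_add_const_eq_posLog, Complex.norm_real, norm_of_nonneg hw0.le,
    posLog_eq_log (by rw [abs_of_pos hw0]; exact hw.le), smul_eq_mul]
  ring

open Real in
/-- For `z < 0`, the logarithmic potential of the arcsine distribution on `[0,4]` is
`U(z) = ∫_0^4 log(x-z)/(π√(x(4-x))) dx = 2 log((√(-z)+√(4-z))/2)`. -/
theorem arcsine_potential_formula (z : ℝ) (hz : z < 0) :
    ∫ x in (0:ℝ)..4, Real.log (x - z) / (π * Real.sqrt (x * (4 - x)))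
      = 2 * Real.log ((Real.sqrt (-z) + Real.sqrt (4 - z)) / 2) := by
  set c := (√(-z) + √(4 - z)) / 2
  have hs : √(-z) ^ 2 = -z := sq_sqrt (by linarith)
  have ht : √(4 - z) ^ 2 = 4 - z := sq_sqrt (by linarith)
  have hs0 : 0 < √(-z) := sqrt_pos.mpr (by linarith)
  have ht2 : 2 < √(4 - z) := by nlinarith [sqrt_nonneg (4 - z)]
  have hw : 1 < c ^ 2 := one_lt_pow₀ (by simp only [c]; linarith) two_ne_zero
  have hwz : c ^ 2 + (c ^ 2)⁻¹ = 2 - z := by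
    have : (c ^ 2)⁻¹ = ((√(4 - z) - √(-z)) / 2) ^ 2 := by
      refine inv_eq_of_mul_eq_one_right ?_
      simp only [c]
      linear_combination ((√(-z) + √(4 - z)) / 2 * ((√(4 - z) - √(-z)) / 2) + 1) * (ht - hs) / 4
    rw [this]; simp only [c]; linear_combination (hs + ht) / 2
  have hint : IntervalIntegrable (fun θ => log (2 - z + 2 * cos θ)) volume 0 π :=
    (Continuous.log (f := fun θ => 2 - z + 2 * cos θ) (by fun_prop) fun θ => by
      nlinarith [neg_one_le_cos θ]).intervalIntegrable 0 π
  calc ∫ x in (0:ℝ)..4, log (x - z) / (π * √(x * (4 - x)))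
      = π⁻¹ * ∫ θ in 0..π, log (2 - z + 2 * cos θ) := by
        simpa [add_comm, add_sub_right_comm, show (4 : ℝ) / 2 = 2 by norm_num] using
          integral_div_pi_mul_sqrt_eq_integral_cos four_pos (fun x => log (x - z))
    _ = circleAverage (fun ζ : ℂ => log (c ^ 2 + (c ^ 2)⁻¹ + 2 * ζ.re)) 0 1 := by
        rw [hwz, circleAverage_comp_re (fun y => log (2 - z + 2 * y)) hint, smul_eq_mul]
    _ = 2 * log c := by rw [circleAverage_log_add_inv_add_two_mul_re hw, log_pow]; push_cast; ring
end
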